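/- Let f be a continuous real-valued function on [0,1]², and for n ≥ 1 let f̲_n and f̄_n be its dyadic lower and upper approximations on the uniform 2^n × 2^n grid. Then, as n → ∞, both sup over copula measures μ of ∫_{[0,1)²} f̲_n dμ and sup over copula measures μ of ∫_{[0,1)²} f̄_n dμ converge to sup over copula measures μ of ∫_{[0,1)²} f dμ. -/

import Mathlib

open MeasureTheory Set

/-- A copula measure: a probability measure on the plane whose marginals are
Lebesgue measure restricted to `[0,1)`. -/
def IsCopulaMeasure (μ : Measure (ℝ × ℝ)) : Prop :=
  IsProbabilityMeasure μ ∧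
  μ.map Prod.fst = volume.restrict (Ico (0:ℝ) 1) ∧
  μ.map Prod.snd = volume.restrict (Ico (0:ℝ) 1)

/-- The half-open grid cell `[(i)/m, (i+1)/m) × [(j)/m, (j+1)/m)` (0-indexed). -/
def gridCell (m : ℕ) (i j : Fin m) : Set (ℝ × ℝ) :=
  Ico (((i : ℕ) : ℝ) / m) ((((i : ℕ) : ℝ) + 1) / m) ×ˢ
    Ico (((j : ℕ) : ℝ) / m) ((((j : ℕ) : ℝ) + 1) / m)

/-- The closure of the grid cell. -/
def closedCell (m : ℕ) (i j : Fin m) : Set (ℝ × ℝ) :=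
  Icc (((i : ℕ) : ℝ) / m) ((((i : ℕ) : ℝ) + 1) / m) ×ˢ
    Icc (((j : ℕ) : ℝ) / m) ((((j : ℕ) : ℝ) + 1) / m)

/-!
Both approximations take on each cell a value of `f` on the closed cell, so by uniform continuity
of `f` on the compact square they are uniformly within `ε` of `f` on `[0,1)²` once the mesh is fine.
A copula measure is a probability measure carried by `[0,1)²`, so their integrals are within `ε`
of `∫ f dμ` uniformly in `μ`, and a supremum moves by at most `ε` under such a perturbation.
-/

open Filter Topology

section SupremumOfUniformLimit

variable {ι α : Type*} {s : Set ι}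

lemma csSup_image_le_csSup_image_add {f g : ι → ℝ} {ε : ℝ} (hs : s.Nonempty)
    (hg : BddAbove (g '' s)) (h : ∀ i ∈ s, f i ≤ g i + ε) :
    sSup (f '' s) ≤ sSup (g '' s) + ε :=
  csSup_le (hs.image f) <| by
    rintro _ ⟨i, hi, rfl⟩
    exact (h i hi).trans (by gcongr; exact le_csSup hg (mem_image_of_mem g hi))

theorem TendstoUniformlyOn.tendsto_csSup_image {F : α → ι → ℝ} {f : ι → ℝ} {l : Filter α}
    (h : TendstoUniformlyOn F f l s) (hs : s.Nonempty) (hf : BddAbove (f '' s)) :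
    Tendsto (fun a => sSup (F a '' s)) l (𝓝 (sSup (f '' s))) := by
  refine Metric.tendsto_nhds.2 fun ε hε => ?_
  filter_upwards [Metric.tendstoUniformlyOn_iff.1 h (ε / 2) (half_pos hε)] with a ha
  have hclose : ∀ i ∈ s, |F a i - f i| < ε / 2 := fun i hi => by
    simpa [Real.dist_eq, abs_sub_comm] using ha i hi
  have hF : BddAbove (F a '' s) := by
    obtain ⟨M, hM⟩ := hf
    refine ⟨M + ε / 2, ?_⟩
    rintro _ ⟨i, hi, rfl⟩
    linarith [hM (mem_image_of_mem f hi), (abs_lt.1 (hclose i hi)).2]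
  have h₁ := csSup_image_le_csSup_image_add hs hf fun i hi =>
    (le_of_lt (by linarith [(abs_lt.1 (hclose i hi)).2]) : F a i ≤ f i + ε / 2)
  have h₂ := csSup_image_le_csSup_image_add hs hF fun i hi =>
    (le_of_lt (by linarith [(abs_lt.1 (hclose i hi)).1]) : f i ≤ F a i + ε / 2)
  rw [Real.dist_eq, abs_lt]
  constructor <;> linarith

end SupremumOfUniformLimit

section Grid

variable {m : ℕ}

lemma gridCell_subset_closedCell (i j : Fin m) : gridCell m i j ⊆ closedCell m i j :=
  prod_mono Ico_subset_Icc_self Ico_subset_Icc_self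

lemma measurableSet_gridCell (i j : Fin m) : MeasurableSet (gridCell m i j) :=
  measurableSet_Ico.prod measurableSet_Ico

lemma mk_div_mem_gridCell (i j : Fin m) :
    (((i : ℕ) : ℝ) / m, ((j : ℕ) : ℝ) / m) ∈ gridCell m i j := by
  have hm : (0 : ℝ) < m := by exact_mod_cast i.pos
  constructor <;> exact ⟨le_rfl, div_lt_div_of_pos_right (lt_add_one _) hm⟩

lemma exists_fin_mem_Ico (hm : 0 < m) {x : ℝ} (hx : x ∈ Ico (0 : ℝ) 1) :
    ∃ i : Fin m, x ∈ Ico (((i : ℕ) : ℝ) / m) ((((i : ℕ) : ℝ) + 1) / m) := by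
  have hm' : (0 : ℝ) < m := by exact_mod_cast hm
  have hxm : 0 ≤ x * m := mul_nonneg hx.1 hm'.le
  refine ⟨⟨⌊x * m⌋₊, (Nat.floor_lt hxm).2 (by nlinarith [hx.2])⟩, ?_, ?_⟩
  · rw [div_le_iff₀ hm']
    exact Nat.floor_le hxm
  · rw [lt_div_iff₀ hm']
    exact Nat.lt_floor_add_one _

lemma exists_mem_gridCell (hm : 0 < m) {p : ℝ × ℝ} (hp : p ∈ Ico (0 : ℝ) 1 ×ˢ Ico (0 : ℝ) 1) :
    ∃ i j : Fin m, p ∈ gridCell m i j := by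
  obtain ⟨i, hi⟩ := exists_fin_mem_Ico hm hp.1
  obtain ⟨j, hj⟩ := exists_fin_mem_Ico hm hp.2
  exact ⟨i, j, hi, hj⟩

lemma closedCell_subset (i j : Fin m) :
    closedCell m i j ⊆ Icc (0 : ℝ) 1 ×ˢ Icc (0 : ℝ) 1 := by
  have hm : (0 : ℝ) < m := by exact_mod_cast i.pos
  have h : ∀ k : Fin m, Icc (((k : ℕ) : ℝ) / m) ((((k : ℕ) : ℝ) + 1) / m) ⊆ Icc 0 1 :=
    fun k => Icc_subset_Icc (by positivity) <| (div_le_one hm).2 <| by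
      exact_mod_cast k.isLt
  exact prod_mono (h i) (h j)

lemma dist_le_of_mem_closedCell {i j : Fin m} {p q : ℝ × ℝ} (hp : p ∈ closedCell m i j)
    (hq : q ∈ closedCell m i j) : dist p q ≤ 1 / m := by
  have h : ∀ {a : ℝ} {x y : ℝ}, x ∈ Icc (a / m) ((a + 1) / m) → y ∈ Icc (a / m) ((a + 1) / m) →
      dist x y ≤ 1 / m := fun hx hy =>
    (Real.dist_le_of_mem_Icc hx hy).trans_eq (by ring)
  exact max_le (h hp.1 hq.1) (h hp.2 hq.2)

end Grid

section GridSample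

variable {m : ℕ} {f g : ℝ × ℝ → ℝ}

def IsGridSample (f : ℝ × ℝ → ℝ) (m : ℕ) (g : ℝ × ℝ → ℝ) : Prop :=
  ∀ i j : Fin m, ∃ q ∈ closedCell m i j, ∀ p ∈ gridCell m i j, g p = f q

lemma isGridSample_of_forall_mem
    (hmem : ∀ i j : Fin m, ∀ p ∈ gridCell m i j, g p ∈ f '' closedCell m i j)
    (hconst : ∀ i j : Fin m, ∀ p ∈ gridCell m i j, ∀ p' ∈ gridCell m i j, g p = g p') :
    IsGridSample f m g := fun i j => by
  obtain ⟨q, hq, hfq⟩ := hmem i j _ (mk_div_mem_gridCell i j)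
  exact ⟨q, hq, fun p hp => (hconst i j p hp _ (mk_div_mem_gridCell i j)).trans hfq.symm⟩

lemma IsGridSample.dist_lt (h : IsGridSample f m g) (hm : 0 < m) {δ ε : ℝ}
    (hf : ∀ p ∈ Icc (0 : ℝ) 1 ×ˢ Icc (0 : ℝ) 1, ∀ q ∈ Icc (0 : ℝ) 1 ×ˢ Icc (0 : ℝ) 1,
      dist p q < δ → dist (f p) (f q) < ε)
    (hmδ : 1 / (m : ℝ) < δ) {p : ℝ × ℝ} (hp : p ∈ Ico (0 : ℝ) 1 ×ˢ Ico (0 : ℝ) 1) :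
    dist (f p) (g p) < ε := by
  obtain ⟨i, j, hij⟩ := exists_mem_gridCell hm hp
  obtain ⟨q, hq, hgq⟩ := h i j
  have hp' := gridCell_subset_closedCell i j hij
  rw [hgq p hij]
  exact hf p (closedCell_subset i j hp') q (closedCell_subset i j hq)
    ((dist_le_of_mem_closedCell hp' hq).trans_lt hmδ)

lemma IsGridSample.aestronglyMeasurable (h : IsGridSample f m g) (hm : 0 < m)
    {μ : Measure (ℝ × ℝ)} (hμ : ∀ᵐ p ∂μ, p ∈ Ico (0 : ℝ) 1 ×ˢ Ico (0 : ℝ) 1) :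
    AEStronglyMeasurable g μ := by
  have hcover : ∀ᵐ p ∂μ, p ∈ ⋃ c : Fin m × Fin m, gridCell m c.1 c.2 :=
    hμ.mono fun p hp => by
      obtain ⟨i, j, hij⟩ := exists_mem_gridCell hm hp
      exact mem_iUnion.2 ⟨(i, j), hij⟩
  rw [← Measure.restrict_eq_self_of_ae_mem hcover, aestronglyMeasurable_iUnion_iff]
  rintro ⟨i, j⟩
  obtain ⟨q, -, hgq⟩ := h i j
  exact aestronglyMeasurable_const.congr <|
    (ae_restrict_mem (measurableSet_gridCell i j)).mono fun p hp => (hgq p hp).symm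

end GridSample

namespace IsCopulaMeasure

variable {μ : Measure (ℝ × ℝ)} {f g : ℝ × ℝ → ℝ}

lemma ae_mem (hμ : IsCopulaMeasure μ) : ∀ᵐ p ∂μ, p ∈ Ico (0 : ℝ) 1 ×ˢ Ico (0 : ℝ) 1 := by
  have hnull : ∀ {π : ℝ × ℝ → ℝ}, Measurable π → μ.map π = volume.restrict (Ico 0 1) →
      ∀ᵐ p ∂μ, π p ∈ Ico (0 : ℝ) 1 := fun hπ hmap =>
    ae_of_ae_map hπ.aemeasurable (by rw [hmap]; exact ae_restrict_mem measurableSet_Ico)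
  filter_upwards [hnull measurable_fst hμ.2.1, hnull measurable_snd hμ.2.2] with p h₁ h₂
  exact ⟨h₁, h₂⟩

lemma integrable (hμ : IsCopulaMeasure μ) (hf : ContinuousOn f (Icc (0 : ℝ) 1 ×ˢ Icc (0 : ℝ) 1)) :
    Integrable f μ := by
  have := hμ.1
  rw [← Measure.restrict_eq_self_of_ae_mem
    (hμ.ae_mem.mono fun p hp => prod_mono Ico_subset_Icc_self Ico_subset_Icc_self hp)]
  exact hf.integrableOn_compact (isCompact_Icc.prod isCompact_Icc)

lemma dist_integral_le (hμ : IsCopulaMeasure μ)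
    (hf : ContinuousOn f (Icc (0 : ℝ) 1 ×ˢ Icc (0 : ℝ) 1)) (hg : AEStronglyMeasurable g μ)
    {ε : ℝ} (h : ∀ p ∈ Ico (0 : ℝ) 1 ×ˢ Ico (0 : ℝ) 1, dist (f p) (g p) ≤ ε) :
    dist (∫ p, f p ∂μ) (∫ p, g p ∂μ) ≤ ε := by
  have := hμ.1
  have hbound : ∀ᵐ p ∂μ, ‖f p - g p‖ ≤ ε := hμ.ae_mem.mono fun p hp => h p hp
  have hfi := hμ.integrable hf
  have hgi : Integrable g μ := by
    simpa using hfi.sub ((integrable_const ε).mono' (hfi.1.sub hg) hbound)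
  rw [dist_eq_norm, ← integral_sub hfi hgi]
  simpa using norm_integral_le_of_norm_le_const hbound

end IsCopulaMeasure

lemma exists_isCopulaMeasure : ∃ μ : Measure (ℝ × ℝ), IsCopulaMeasure μ := by
  set ν := volume.restrict (Ico (0 : ℝ) 1)
  have : IsProbabilityMeasure ν := ⟨by simp [ν]⟩
  exact ⟨ν.prod ν, inferInstance, by simp [ν], by simp [ν]⟩

lemma bddAbove_integral_image_isCopulaMeasure {f : ℝ × ℝ → ℝ}
    (hf : ContinuousOn f (Icc (0 : ℝ) 1 ×ˢ Icc (0 : ℝ) 1)) :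
    BddAbove ((fun μ => ∫ p, f p ∂μ) '' {μ | IsCopulaMeasure μ}) := by
  obtain ⟨M, hM⟩ := (isCompact_Icc.prod isCompact_Icc).exists_bound_of_continuousOn hf
  refine ⟨M, ?_⟩
  rintro _ ⟨μ, hμ, rfl⟩
  have := hμ.1
  have hbound : ∀ᵐ p ∂μ, ‖f p‖ ≤ M :=
    hμ.ae_mem.mono fun p hp => hM p (prod_mono Ico_subset_Icc_self Ico_subset_Icc_self hp)
  simpa using (le_abs_self _).trans (norm_integral_le_of_norm_le_const hbound)

theorem tendstoUniformlyOn_integral_of_isGridSample {α : Type*} {l : Filter α} {m : α → ℕ}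
    {f : ℝ × ℝ → ℝ} {g : α → ℝ × ℝ → ℝ} (hf : ContinuousOn f (Icc (0 : ℝ) 1 ×ˢ Icc (0 : ℝ) 1))
    (hm : Tendsto m l atTop) (hg : ∀ᶠ a in l, IsGridSample f (m a) (g a)) :
    TendstoUniformlyOn (fun a μ => ∫ p, g a p ∂μ) (fun μ => ∫ p, f p ∂μ) l
      {μ | IsCopulaMeasure μ} := by
  refine Metric.tendstoUniformlyOn_iff.2 fun ε hε => ?_
  obtain ⟨δ, hδ, hfδ⟩ := Metric.uniformContinuousOn_iff.1
    ((isCompact_Icc.prod isCompact_Icc).uniformContinuousOn_of_continuous hf) (ε / 2) (half_pos hε)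
  have hmesh : ∀ᶠ a in l, 1 / (m a : ℝ) < δ :=
    (tendsto_one_div_atTop_nhds_zero_nat.comp hm).eventually (gt_mem_nhds hδ)
  filter_upwards [hg, hmesh, hm.eventually_gt_atTop 0] with a hga hmδ hpos μ hμ
  exact (hμ.dist_integral_le hf (hga.aestronglyMeasurable hpos hμ.ae_mem)
    fun p hp => (hga.dist_lt hpos hfδ hmδ hp).le).trans_lt (half_lt_self hε)

theorem tendsto_sSup_integral_of_isGridSample {f : ℝ × ℝ → ℝ}
    (hf : ContinuousOn f (Icc (0 : ℝ) 1 ×ˢ Icc (0 : ℝ) 1)) {g : ℕ → ℝ × ℝ → ℝ}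
    (hg : ∀ n, 1 ≤ n → IsGridSample f (2 ^ n) (g n)) :
    Tendsto (fun n => sSup {x : ℝ | ∃ μ : Measure (ℝ × ℝ), IsCopulaMeasure μ ∧ x = ∫ p, g n p ∂μ})
      atTop (𝓝 (sSup {x : ℝ | ∃ μ : Measure (ℝ × ℝ), IsCopulaMeasure μ ∧ x = ∫ p, f p ∂μ})) := by
  have hset : ∀ h : ℝ × ℝ → ℝ, {x : ℝ | ∃ μ : Measure (ℝ × ℝ), IsCopulaMeasure μ ∧ x = ∫ p, h p ∂μ}
      = (fun μ => ∫ p, h p ∂μ) '' {μ | IsCopulaMeasure μ} := fun h => by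
    ext
    simp [eq_comm]
  simp only [hset]
  exact (tendstoUniformlyOn_integral_of_isGridSample hf
    (tendsto_pow_atTop_atTop_of_one_lt one_lt_two) (eventually_atTop.2 ⟨1, hg⟩)).tendsto_csSup_image
    exists_isCopulaMeasure (bddAbove_integral_image_isCopulaMeasure hf)

theorem stmt_10 (f : ℝ × ℝ → ℝ) (hf : ContinuousOn f (Icc (0:ℝ) 1 ×ˢ Icc (0:ℝ) 1))
    (fl fu : ℕ → ℝ × ℝ → ℝ)
    (hfl : ∀ n : ℕ, 1 ≤ n → ∀ i j : Fin (2 ^ n), ∀ p ∈ gridCell (2 ^ n) i j,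
      IsLeast (f '' closedCell (2 ^ n) i j) (fl n p))
    (hfu : ∀ n : ℕ, 1 ≤ n → ∀ i j : Fin (2 ^ n), ∀ p ∈ gridCell (2 ^ n) i j,
      IsGreatest (f '' closedCell (2 ^ n) i j) (fu n p)) :
    Filter.Tendsto
      (fun n : ℕ => sSup {x : ℝ | ∃ μ : Measure (ℝ × ℝ), IsCopulaMeasure μ ∧ x = ∫ p, fl n p ∂μ})
      Filter.atTop
      (nhds (sSup {x : ℝ | ∃ μ : Measure (ℝ × ℝ), IsCopulaMeasure μ ∧ x = ∫ p, f p ∂μ})) ∧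
    Filter.Tendsto
      (fun n : ℕ => sSup {x : ℝ | ∃ μ : Measure (ℝ × ℝ), IsCopulaMeasure μ ∧ x = ∫ p, fu n p ∂μ})
      Filter.atTop
      (nhds (sSup {x : ℝ | ∃ μ : Measure (ℝ × ℝ), IsCopulaMeasure μ ∧ x = ∫ p, f p ∂μ})) := by
  refine ⟨tendsto_sSup_integral_of_isGridSample hf fun n hn => ?_,
    tendsto_sSup_integral_of_isGridSample hf fun n hn => ?_⟩
  · exact isGridSample_of_forall_mem (fun i j p hp => (hfl n hn i j p hp).1)
      fun i j p hp p' hp' => (hfl n hn i j p hp).unique (hfl n hn i j p' hp')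
  · exact isGridSample_of_forall_mem (fun i j p hp => (hfu n hn i j p hp).1)
      fun i j p hp p' hp' => (hfu n hn i j p hp).unique (hfu n hn i j p' hp')
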